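/- Let N = 2^e with e ≥ 1, let m be an integer with 5m ≡ 1 (mod N), and set S = L²⁰·R^m·L⁻⁴·R⁻¹ in SL(2,ℤ). Then the element S⁻¹·R·S·R⁻²⁵ lies in Γ(N). -/

import Mathlib

/-!
Modulo `N`, the hypothesis makes `5` a unit with inverse `m`, and `S` reduces to the diagonal
matrix `diag(m, 5) = diag(5⁻¹, 5)`. Conjugating `R = [[1,1],[0,1]]` by `diag(5⁻¹, 5)` multiplies
its off-diagonal entry by `5² = 25`, so `S⁻¹ R S ≡ R²⁵ (mod N)`.
-/

open Matrix CongruenceSubgroup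

local notation "SL2Z" => Matrix.SpecialLinearGroup (Fin 2) ℤ

/-- The matrix `L = [[1,0],[1,1]]` as an element of `SL(2, ℤ)`. -/
def L : SL2Z := ⟨!![1, 0; 1, 1], by norm_num [Matrix.det_fin_two_of]⟩

/-- The matrix `R = [[1,1],[0,1]]` as an element of `SL(2, ℤ)`. -/
def R : SL2Z := ⟨!![1, 1; 0, 1], by norm_num [Matrix.det_fin_two_of]⟩

theorem Matrix.map_fin_two {α β : Type*} (f : α → β) (a b c d : α) :
    (!![a, b; c, d]).map f = !![f a, f b; f c, f d] := by
  ext i j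
  fin_cases i <;> fin_cases j <;> rfl

theorem unipotent_mul_diagonal_fin_two {A : Type*} [CommRing A] {a b : A} (h : b * a = 1)
    (x : A) : !![1, x; 0, 1] * !![b, 0; 0, a] = !![b, 0; 0, a] * !![1, a ^ 2 * x; 0, 1] := by
  rw [mul_fin_two, mul_fin_two]
  congrm !![?_, ?_; ?_, ?_] <;> [ring; linear_combination -(a * x) * h; ring; ring]

lemma coe_R : (R : Matrix (Fin 2) (Fin 2) ℤ) = !![1, 1; 0, 1] := rfl

lemma coe_R_zpow (n : ℤ) : ((R ^ n : SL2Z) : Matrix (Fin 2) (Fin 2) ℤ) = !![1, n; 0, 1] :=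
  ModularGroup.coe_T_zpow n

lemma L_eq_conj_R_inv : L = ModularGroup.S * R⁻¹ * ModularGroup.S⁻¹ := by decide

lemma coe_L_zpow (n : ℤ) : ((L ^ n : SL2Z) : Matrix (Fin 2) (Fin 2) ℤ) = !![1, 0; n, 1] := by
  rw [L_eq_conj_R_inv, conj_zpow, _root_.inv_zpow']
  simp [coe_R_zpow, adjugate_fin_two]

lemma coe_L_pow_mul_R_zpow_mul_L_zpow_mul_R_inv (m : ℤ) :
    ((L ^ 20 * R ^ m * L ^ (-4 : ℤ) * R⁻¹ : SL2Z) : Matrix (Fin 2) (Fin 2) ℤ) =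
      !![1 - 4 * m, 5 * m - 1; 16 - 80 * m, 100 * m - 15] := by
  rw [show (L ^ 20 : SL2Z) = L ^ (20 : ℤ) from (zpow_natCast L 20).symm,
    show (R⁻¹ : SL2Z) = R ^ (-1 : ℤ) from (zpow_neg_one R).symm]
  simp only [Matrix.SpecialLinearGroup.coe_mul, coe_L_zpow, coe_R_zpow, mul_fin_two]
  congrm !![?_, ?_; ?_, ?_] <;> ring

lemma mapMatrix_coe_L_pow_mul_R_zpow_mul_L_zpow_mul_R_inv {N : ℕ} {m : ℤ}
    (hm : (m : ZMod N) * 5 = 1) :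
    (Int.castRingHom (ZMod N)).mapMatrix ↑(L ^ 20 * R ^ m * L ^ (-4 : ℤ) * R⁻¹ : SL2Z) =
      !![(m : ZMod N), 0; 0, 5] := by
  simp only [coe_L_pow_mul_R_zpow_mul_L_zpow_mul_R_inv, RingHom.mapMatrix_apply, map_fin_two,
    eq_intCast]
  push_cast
  congrm !![?_, ?_; ?_, ?_] <;> [linear_combination -hm; linear_combination hm;
    linear_combination -16 * hm; linear_combination 20 * hm]

theorem stmt_2_general (e : ℕ) (m : ℤ)
    (hm : 5 * m ≡ 1 [ZMOD ((2 : ℤ) ^ e)])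
    (S : SL2Z) (hS : S = L ^ 20 * R ^ m * L ^ (-4 : ℤ) * R⁻¹) :
    S⁻¹ * R * S * R ^ (-25 : ℤ) ∈ Gamma (2 ^ e) := by
  set π := Matrix.SpecialLinearGroup.map (n := Fin 2) (Int.castRingHom (ZMod (2 ^ e)))
  have hm' : (m : ZMod (2 ^ e)) * 5 = 1 := by
    have := (ZMod.intCast_eq_intCast_iff (5 * m) 1 (2 ^ e)).2 (by simpa using hm)
    push_cast at this
    linear_combination this
  have hπS : (π S : Matrix (Fin 2) (Fin 2) (ZMod (2 ^ e))) = !![(m : ZMod (2 ^ e)), 0; 0, 5] := by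
    rw [Matrix.SpecialLinearGroup.map_apply_coe, hS]
    exact mapMatrix_coe_L_pow_mul_R_zpow_mul_L_zpow_mul_R_inv hm'
  have hR_mul_S : π R * π S = π S * π (R ^ (25 : ℤ)) := by
    apply Subtype.ext
    simp only [Matrix.SpecialLinearGroup.coe_mul, hπS, π, Matrix.SpecialLinearGroup.map_apply_coe,
      coe_R, coe_R_zpow, RingHom.mapMatrix_apply, map_fin_two, map_one, map_zero]
    convert unipotent_mul_diagonal_fin_two hm' 1 using 3
    norm_num
  rw [Gamma_mem']
  calc π (S⁻¹ * R * S * R ^ (-25 : ℤ)) = (π S)⁻¹ * (π R * π S) * (π (R ^ (25 : ℤ)))⁻¹ := by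
        simp [mul_assoc]
    _ = 1 := by rw [hR_mul_S]; group

theorem stmt_2 (e : ℕ) (he : 1 ≤ e) (m : ℤ)
    (hm : 5 * m ≡ 1 [ZMOD ((2 : ℤ) ^ e)])
    (S : SL2Z) (hS : S = L ^ 20 * R ^ m * L ^ (-4 : ℤ) * R⁻¹) :
    S⁻¹ * R * S * R ^ (-25 : ℤ) ∈ Gamma (2 ^ e) :=
  stmt_2_general e m hm S hS
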